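/- For all integers k ≥ 2, n ≥ 1, p ≥ 0, r ≥ 0, the images of all generators of G(k,n,p,r) other than c₂ and d₂ are trivial: a₁ = b₁ = a₂ = b₂ = c₁ = d₁ = c̃ = d̃ = 1 and c_i = d_i = 1 for every 3 ≤ i ≤ k. In particular, G(k,n,p,r) is generated by the images of c₂ and d₂. (Step in the proof of Lemma 3.3.) -/

import Mathlib

/-- Generators of the presentation: `a1, b1, a2, b2`, the tilde generators
`ct = c̃`, `dt = d̃`, and `c i`, `d i` for `i : Fin k`, where `c i` denotes
`c_{i+1}` (so `c ⟨0,_⟩ = c₁`, `c ⟨1,_⟩ = c₂`, …). -/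
inductive Gen (k : ℕ) : Type
  | a1 | b1 | a2 | b2 | ct | dt
  | c : Fin k → Gen k
  | d : Fin k → Gen k

namespace Gen

variable (k : ℕ)

def A1 : FreeGroup (Gen k) := FreeGroup.of Gen.a1
def B1 : FreeGroup (Gen k) := FreeGroup.of Gen.b1
def A2 : FreeGroup (Gen k) := FreeGroup.of Gen.a2
def B2 : FreeGroup (Gen k) := FreeGroup.of Gen.b2
def Ct : FreeGroup (Gen k) := FreeGroup.of Gen.ct
def Dt : FreeGroup (Gen k) := FreeGroup.of Gen.dt
def C (i : Fin k) : FreeGroup (Gen k) := FreeGroup.of (Gen.c i)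
def D (i : Fin k) : FreeGroup (Gen k) := FreeGroup.of (Gen.d i)

end Gen

open Gen in
open scoped commutatorElement in
/-- The relators of the presentation of `π₁(M)` from Lemma 3.2 (a relation
`w = v` is encoded as the relator `w * v⁻¹`). -/
def rels (k n p r : ℕ) : Set (FreeGroup (Gen k)) :=
  { x |
    -- a₂ = c̃⁻¹ a₁ c̃
    x = A2 k * ((Ct k)⁻¹ * A1 k * Ct k)⁻¹ ∨
    -- b₂ = c̃⁻¹ b₁ c̃
    x = B2 k * ((Ct k)⁻¹ * B1 k * Ct k)⁻¹ ∨
    -- b₁ = c̃⁻¹ b₂ c̃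
    x = B1 k * ((Ct k)⁻¹ * B2 k * Ct k)⁻¹ ∨
    -- [b₂, d̃] = 1
    x = ⁅B2 k, Dt k⁆ ∨
    -- [a₁⁻¹ b₁⁻¹ a₂, d̃] = 1
    x = ⁅(A1 k)⁻¹ * (B1 k)⁻¹ * A2 k, Dt k⁆ ∨
    -- [a₂⁻¹ b₂⁻¹ a₁, d̃] = 1
    x = ⁅(A2 k)⁻¹ * (B2 k)⁻¹ * A1 k, Dt k⁆ ∨
    -- c̃⁻¹ a₁ a₂ c̃ a₁⁻¹ a₂⁻¹ = d̃
    x = (Ct k)⁻¹ * A1 k * A2 k * Ct k * (A1 k)⁻¹ * (A2 k)⁻¹ * (Dt k)⁻¹ ∨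
    -- [a₁, d̃⁻¹] = c̃
    x = ⁅A1 k, (Dt k)⁻¹⁆ * (Ct k)⁻¹ ∨
    -- [b₁, d̃] = 1
    x = ⁅B1 k, Dt k⁆ ∨
    -- [a₁, b₁][a₂, b₂] = 1
    x = ⁅A1 k, B1 k⁆ * ⁅A2 k, B2 k⁆ ∨
    -- [c₁,d₁][c₂,d₂]⋯[c_k,d_k][c̃,d̃] = 1
    x = (List.ofFn fun i : Fin k => ⁅C k i, D k i⁆).prod * ⁅Ct k, Dt k⁆ ∨
    -- relations involving c₁, d₁  (index 0)
    (∃ i : Fin k, (i : ℕ) = 0 ∧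
      (x = ⁅(B1 k)⁻¹, (D k i)⁻¹⁆ * (A1 k)⁻¹ ∨      -- [b₁⁻¹,d₁⁻¹] = a₁
       x = ⁅(A1 k)⁻¹, D k i⁆ * (B1 k)⁻¹ ∨           -- [a₁⁻¹,d₁] = b₁
       x = ⁅(B2 k)⁻¹, (D k i)⁻¹⁆ * (C k i)⁻¹ ∨      -- [b₂⁻¹,d₁⁻¹] = c₁
       x = ⁅B2 k, (C k i)⁻¹⁆ ^ n * (D k i)⁻¹ ∨      -- [b₂,c₁⁻¹]ⁿ = d₁
       x = ⁅A1 k, C k i⁆ ∨ x = ⁅B1 k, C k i⁆ ∨      -- [a₁,c₁] = [b₁,c₁] = 1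
       x = ⁅A2 k, C k i⁆ ∨ x = ⁅A2 k, D k i⁆)) ∨    -- [a₂,c₁] = [a₂,d₁] = 1
    -- relations involving c₂, d₂  (index 1)
    (∃ i : Fin k, (i : ℕ) = 1 ∧
      (x = ⁅(B2 k)⁻¹, (D k i)⁻¹⁆ * ((C k i) ^ p)⁻¹ ∨  -- [b₂⁻¹,d₂⁻¹] = c₂ᵖ
       x = ⁅B2 k, (C k i)⁻¹⁆ * ((D k i) ^ r)⁻¹)) ∨    -- [b₂,c₂⁻¹] = d₂ʳ
    -- relations [b₂⁻¹,d_i⁻¹] = c_i, [b₂,c_i⁻¹] = d_i for 3 ≤ i ≤ k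
    (∃ i : Fin k, 2 ≤ (i : ℕ) ∧
      (x = ⁅(B2 k)⁻¹, (D k i)⁻¹⁆ * (C k i)⁻¹ ∨
       x = ⁅B2 k, (C k i)⁻¹⁆ * (D k i)⁻¹)) ∨
    -- commuting relations for 2 ≤ i ≤ k
    (∃ i : Fin k, 1 ≤ (i : ℕ) ∧
      (x = ⁅A2 k, C k i⁆ ∨ x = ⁅A2 k, D k i⁆ ∨
       x = ⁅A1 k, C k i⁆ ∨ x = ⁅B1 k, D k i⁆ ∨
       x = ⁅A1 k, D k i⁆ ∨ x = ⁅B1 k, C k i⁆)) }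

/-- The group `G(k,n,p,r)` of Lemma 3.2/3.3: the fundamental group of the
surgered manifold, given by the above presentation. -/
abbrev G (k n p r : ℕ) : Type := PresentedGroup (rels k n p r)

/-- The image in `G k n p r` of a generator. -/
abbrev gen (k n p r : ℕ) (g : Gen k) : G k n p r := PresentedGroup.of g

/-!
Conjugation by `c̃` swaps `b₁` and `b₂`, and `c̃ = [a₁, d̃⁻¹]`. The product of the relations
`[a₁⁻¹b₁⁻¹a₂, d̃] = 1` and `[a₂⁻¹b₂⁻¹a₁, d̃] = 1` says that `d̃` commutes with `a₁⁻¹(b₂b₁)a₁`,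
while `d̃` commutes with `b₂b₁` directly; hence `b₂b₁` commutes with `c̃`, and therefore `b₁` and
`b₂` commute. Then `b₁` commutes with `b₂` and `c₁`, hence with `d₁ = [b₂, c₁⁻¹]ⁿ`, so
`a₁ = [b₁⁻¹, d₁⁻¹] = 1` and `b₁ = [a₁⁻¹, d₁] = 1`. The other generators except `c₂, d₂` now die one
relation at a time; for `i ≥ 3`, `c_i = [b₂⁻¹, d_i⁻¹]` and `d_i = [b₂, c_i⁻¹]` die with `b₂`.
-/

open scoped commutatorElement

section GroupLemmas

variable {H : Type*} [Group H]

theorem Commute.of_conj_swap {t b b' : H} (hb' : b' = t⁻¹ * b * t) (hb : b = t⁻¹ * b' * t)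
    (h : Commute t (b * b')) : Commute b b' :=
  calc b * b' = t⁻¹ * (t * (b * b')) := by group
    _ = t⁻¹ * (b * b' * t) := by rw [h.eq]
    _ = (t⁻¹ * b * t) * (t⁻¹ * b' * t) := by group
    _ = b' * b := by rw [← hb', ← hb]

theorem Commute.commutatorElement_right_of_conj {x a s : H} (hs : Commute x s)
    (has : Commute (a⁻¹ * x * a) s) : Commute x ⁅a, s⁆ := by
  have hconj : Commute x (a * s * a⁻¹) := by
    simpa [mul_assoc] using (Commute.conj_iff a).mpr has
  simpa [commutatorElement_def, mul_assoc] using hconj.mul_right hs.inv_right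

theorem Commute.commutatorElement_right {x y z : H} (hy : Commute x y) (hz : Commute x z) :
    Commute x ⁅y, z⁆ := by
  simpa [commutatorElement_def] using
    ((hy.mul_right hz).mul_right hy.inv_right).mul_right hz.inv_right

end GroupLemmas

theorem PresentedGroup.commute_mk_of_commutatorElement_mem {α : Type*}
    {rels : Set (FreeGroup α)} {x y : FreeGroup α} (h : ⁅x, y⁆ ∈ rels) :
    Commute (mk rels x) (mk rels y) := by
  rw [← commutatorElement_eq_one_iff_commute, ← map_commutatorElement]
  exact one_of_mem h

theorem PresentedGroup.closure_eq_top_of_forall_of_mem_or_eq_one {α : Type*}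
    {rels : Set (FreeGroup α)} {S : Set (PresentedGroup rels)}
    (h : ∀ a, (of a : PresentedGroup rels) ∈ S ∨ (of a : PresentedGroup rels) = 1) :
    Subgroup.closure S = ⊤ := by
  refine (Subgroup.eq_top_iff' _).2 (generated_by rels _ fun a => ?_)
  rcases h a with ha | ha
  · exact Subgroup.subset_closure ha
  · exact ha ▸ one_mem _

/-- Relations of `G(k,n,p,r)` among `a₁, b₁, a₂, b₂, c̃, d̃, c₁, d₁` that already force all eight
elements to be trivial. -/
structure SurgeryRelations {H : Type*} [Group H] (n : ℕ) (a₁ b₁ a₂ b₂ ct dt c₁ d₁ : H) :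
    Prop where
  a₂_eq_conj : a₂ = ct⁻¹ * a₁ * ct
  b₂_eq_conj : b₂ = ct⁻¹ * b₁ * ct
  b₁_eq_conj : b₁ = ct⁻¹ * b₂ * ct
  commute_b₂_dt : Commute b₂ dt
  commute_a₁b₁a₂_dt : Commute (a₁⁻¹ * b₁⁻¹ * a₂) dt
  commute_a₂b₂a₁_dt : Commute (a₂⁻¹ * b₂⁻¹ * a₁) dt
  eq_dt : ct⁻¹ * a₁ * a₂ * ct * a₁⁻¹ * a₂⁻¹ = dt
  commutator_eq_ct : ⁅a₁, dt⁻¹⁆ = ct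
  commute_b₁_dt : Commute b₁ dt
  commutator_eq_a₁ : ⁅b₁⁻¹, d₁⁻¹⁆ = a₁
  commutator_eq_b₁ : ⁅a₁⁻¹, d₁⁆ = b₁
  commutator_eq_c₁ : ⁅b₂⁻¹, d₁⁻¹⁆ = c₁
  commutator_pow_eq_d₁ : ⁅b₂, c₁⁻¹⁆ ^ n = d₁
  commute_b₁_c₁ : Commute b₁ c₁

namespace SurgeryRelations

variable {H : Type*} [Group H] {n : ℕ} {a₁ b₁ a₂ b₂ ct dt c₁ d₁ : H}
  (h : SurgeryRelations n a₁ b₁ a₂ b₂ ct dt c₁ d₁)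
include h

theorem commute_b₂_b₁ : Commute b₂ b₁ := by
  have hdt : Commute (b₂ * b₁) dt := h.commute_b₂_dt.mul_left h.commute_b₁_dt
  have hconj : Commute (a₁⁻¹ * (b₂ * b₁) * a₁) dt := by
    have := (h.commute_a₁b₁a₂_dt.mul_left h.commute_a₂b₂a₁_dt).inv_left
    rwa [show (a₁⁻¹ * b₁⁻¹ * a₂ * (a₂⁻¹ * b₂⁻¹ * a₁))⁻¹ = a₁⁻¹ * (b₂ * b₁) * a₁ by group] at this
  have hct : Commute (b₂ * b₁) ct :=
    h.commutator_eq_ct ▸ hdt.inv_right.commutatorElement_right_of_conj hconj.inv_right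
  exact hct.symm.of_conj_swap h.b₁_eq_conj h.b₂_eq_conj

theorem commute_b₁_d₁ : Commute b₁ d₁ :=
  h.commutator_pow_eq_d₁ ▸
    (h.commute_b₂_b₁.symm.commutatorElement_right h.commute_b₁_c₁.inv_right).pow_right n

theorem a₁_eq_one : a₁ = 1 :=
  h.commutator_eq_a₁ ▸ h.commute_b₁_d₁.inv_inv.commutator_eq

theorem b₁_eq_one : b₁ = 1 := by
  rw [← h.commutator_eq_b₁, h.a₁_eq_one, inv_one, commutatorElement_one_left]

theorem a₂_eq_one : a₂ = 1 := by
  rw [h.a₂_eq_conj, h.a₁_eq_one, mul_one, inv_mul_cancel]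

theorem b₂_eq_one : b₂ = 1 := by
  rw [h.b₂_eq_conj, h.b₁_eq_one, mul_one, inv_mul_cancel]

theorem ct_eq_one : ct = 1 := by
  rw [← h.commutator_eq_ct, h.a₁_eq_one, commutatorElement_one_left]

theorem dt_eq_one : dt = 1 := by
  rw [← h.eq_dt, h.a₁_eq_one, h.a₂_eq_one, h.ct_eq_one]; group

theorem c₁_eq_one : c₁ = 1 := by
  rw [← h.commutator_eq_c₁, h.b₂_eq_one, inv_one, commutatorElement_one_left]

theorem d₁_eq_one : d₁ = 1 := by
  rw [← h.commutator_pow_eq_d₁, h.b₂_eq_one, commutatorElement_one_left, one_pow]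

end SurgeryRelations

open Gen PresentedGroup in
theorem surgeryRelations_gen (k n p r : ℕ) (i : Fin k) (hi : (i : ℕ) = 0) :
    SurgeryRelations n (gen k n p r .a1) (gen k n p r .b1) (gen k n p r .a2) (gen k n p r .b2)
      (gen k n p r .ct) (gen k n p r .dt) (gen k n p r (.c i)) (gen k n p r (.d i)) := by
  refine
    { a₂_eq_conj := mk_eq_mk_of_mul_inv_mem (x := A2 k) (y := (Ct k)⁻¹ * A1 k * Ct k) ?_
      b₂_eq_conj := mk_eq_mk_of_mul_inv_mem (x := B2 k) (y := (Ct k)⁻¹ * B1 k * Ct k) ?_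
      b₁_eq_conj := mk_eq_mk_of_mul_inv_mem (x := B1 k) (y := (Ct k)⁻¹ * B2 k * Ct k) ?_
      commute_b₂_dt := commute_mk_of_commutatorElement_mem (x := B2 k) (y := Dt k) ?_
      commute_a₁b₁a₂_dt :=
        commute_mk_of_commutatorElement_mem (x := (A1 k)⁻¹ * (B1 k)⁻¹ * A2 k) (y := Dt k) ?_
      commute_a₂b₂a₁_dt :=
        commute_mk_of_commutatorElement_mem (x := (A2 k)⁻¹ * (B2 k)⁻¹ * A1 k) (y := Dt k) ?_
      eq_dt := mk_eq_mk_of_mul_inv_mem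
        (x := (Ct k)⁻¹ * A1 k * A2 k * Ct k * (A1 k)⁻¹ * (A2 k)⁻¹) (y := Dt k) ?_
      commutator_eq_ct := mk_eq_mk_of_mul_inv_mem (x := ⁅A1 k, (Dt k)⁻¹⁆) (y := Ct k) ?_
      commute_b₁_dt := commute_mk_of_commutatorElement_mem (x := B1 k) (y := Dt k) ?_
      commutator_eq_a₁ := mk_eq_mk_of_mul_inv_mem (x := ⁅(B1 k)⁻¹, (D k i)⁻¹⁆) (y := A1 k) ?_
      commutator_eq_b₁ := mk_eq_mk_of_mul_inv_mem (x := ⁅(A1 k)⁻¹, D k i⁆) (y := B1 k) ?_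
      commutator_eq_c₁ := mk_eq_mk_of_mul_inv_mem (x := ⁅(B2 k)⁻¹, (D k i)⁻¹⁆) (y := C k i) ?_
      commutator_pow_eq_d₁ := (map_pow (mk _) ⁅B2 k, (C k i)⁻¹⁆ n).symm.trans
        (mk_eq_mk_of_mul_inv_mem (y := D k i) ?_)
      commute_b₁_c₁ := commute_mk_of_commutatorElement_mem (x := B1 k) (y := C k i) ?_ }
  all_goals rw [rels, Set.mem_ofPred_eq]; grind

open Gen PresentedGroup in
theorem gen_c_eq_one_and_gen_d_eq_one_of_two_le {k n p r : ℕ} {i : Fin k} (hi : 2 ≤ (i : ℕ))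
    (hb₂ : gen k n p r .b2 = 1) : gen k n p r (.c i) = 1 ∧ gen k n p r (.d i) = 1 := by
  have hc : ⁅(gen k n p r .b2)⁻¹, (gen k n p r (.d i))⁻¹⁆ = gen k n p r (.c i) :=
    mk_eq_mk_of_mul_inv_mem (x := ⁅(B2 k)⁻¹, (D k i)⁻¹⁆) (y := C k i)
      (by rw [rels, Set.mem_ofPred_eq]; grind)
  have hd : ⁅gen k n p r .b2, (gen k n p r (.c i))⁻¹⁆ = gen k n p r (.d i) :=
    mk_eq_mk_of_mul_inv_mem (x := ⁅B2 k, (C k i)⁻¹⁆) (y := D k i)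
      (by rw [rels, Set.mem_ofPred_eq]; grind)
  rw [← hc, ← hd, hb₂, inv_one, commutatorElement_one_left, commutatorElement_one_left]
  exact ⟨rfl, rfl⟩

/-- step of the proof of Lemma 3.3: all generators of
`G(k,n,p,r)` other than `c₂` and `d₂` have trivial image, and consequently
`G(k,n,p,r)` is generated by the images of `c₂` and `d₂`. -/
theorem generators_trivial_except_c2_d2 (k n p r : ℕ) (hk : 2 ≤ k) :
    gen k n p r Gen.a1 = 1 ∧ gen k n p r Gen.b1 = 1 ∧
    gen k n p r Gen.a2 = 1 ∧ gen k n p r Gen.b2 = 1 ∧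
    gen k n p r Gen.ct = 1 ∧ gen k n p r Gen.dt = 1 ∧
    (∀ i : Fin k, (i : ℕ) ≠ 1 →
      gen k n p r (Gen.c i) = 1 ∧ gen k n p r (Gen.d i) = 1) ∧
    Subgroup.closure
      {gen k n p r (Gen.c ⟨1, by omega⟩), gen k n p r (Gen.d ⟨1, by omega⟩)} = ⊤ := by
  have h := surgeryRelations_gen k n p r ⟨0, by omega⟩ rfl
  have hcd (i : Fin k) (hi : (i : ℕ) ≠ 1) : gen k n p r (.c i) = 1 ∧ gen k n p r (.d i) = 1 := by
    obtain hi₀ | hi₂ : (i : ℕ) = 0 ∨ 2 ≤ (i : ℕ) := by omega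
    · rw [show i = ⟨0, by omega⟩ from Fin.ext hi₀]
      exact ⟨h.c₁_eq_one, h.d₁_eq_one⟩
    · exact gen_c_eq_one_and_gen_d_eq_one_of_two_le hi₂ h.b₂_eq_one
  refine ⟨h.a₁_eq_one, h.b₁_eq_one, h.a₂_eq_one, h.b₂_eq_one, h.ct_eq_one, h.dt_eq_one, hcd,
    PresentedGroup.closure_eq_top_of_forall_of_mem_or_eq_one fun g => ?_⟩
  cases g with
  | a1 => exact .inr h.a₁_eq_one
  | b1 => exact .inr h.b₁_eq_one
  | a2 => exact .inr h.a₂_eq_one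
  | b2 => exact .inr h.b₂_eq_one
  | ct => exact .inr h.ct_eq_one
  | dt => exact .inr h.dt_eq_one
  | c i =>
    obtain rfl | hi := eq_or_ne i ⟨1, by omega⟩
    exacts [.inl (.inl rfl), .inr (hcd i (Fin.val_ne_iff.mpr hi)).1]
  | d i =>
    obtain rfl | hi := eq_or_ne i ⟨1, by omega⟩
    exacts [.inl (.inr rfl), .inr (hcd i (Fin.val_ne_iff.mpr hi)).2]
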